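/- arXiv:2603.17849 — 3 statements merged into one kernel-verified Lean document; each statement's English description precedes it below -/
import Mathlib

section
/- Let μ be a measure on ℝⁿ, let v_J : ℝⁿ → ℝⁿ be a continuous vector field that is weakly divergence-free with respect to μ, and let ψ₁, …, ψ_N : ℝⁿ → ℝ be smooth compactly supported dictionary functions. Then the Galerkin matrix K_J ∈ ℝ^{N×N} with entries (K_J)_{ij} = ∫ ψ_i(x) ⟨∇ψ_j(x), v_J(x)⟩ dμ(x) is skew-symmetric: K_J + K_Jᵀ = 0. -/
open MeasureTheory Matrix

/-- Coordinate gradient of a scalar function on `ℝⁿ = Fin n → ℝ`. -/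
noncomputable def grad {n : ℕ} (f : (Fin n → ℝ) → ℝ) (x : Fin n → ℝ) : Fin n → ℝ :=
  fun i => fderiv ℝ f x (Pi.single i 1)

lemma grad_mul {n : ℕ} (f g : (Fin n → ℝ) → ℝ) (hf : ContDiff ℝ (⊤ : ℕ∞) f) (hg : ContDiff ℝ (⊤ : ℕ∞) g)
    (x : Fin n → ℝ) :
    grad (fun y => f y * g y) x = fun i => f x * grad g x i + g x * grad f x i := by
  funext i
  have hd : fderiv ℝ (fun y => f y * g y) x =
      f x • fderiv ℝ g x + g x • fderiv ℝ f x :=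
    fderiv_fun_mul (hf.differentiable (by simp) x) (hg.differentiable (by simp) x)
  simp [grad, hd, mul_comm]

/-- **Skew-symmetry of the Galerkin projection of `K_J`.**
For a continuous, weakly divergence-free vector field `vJ` and smooth compactly supported
dictionary functions `ψ₁, …, ψ_N`, the Galerkin matrix
`(K_J)_{ij} = ∫ ψ_i ⟨∇ψ_j, vJ⟩ dμ` is skew-symmetric. -/
theorem galerkin_KJ_skew_symmetric {n N : ℕ}
    (μ : Measure (Fin n → ℝ)) [IsLocallyFiniteMeasure μ]
    (vJ : (Fin n → ℝ) → (Fin n → ℝ)) (hvJ : Continuous vJ)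
    (hdiv : ∀ φ : (Fin n → ℝ) → ℝ, ContDiff ℝ (⊤ : ℕ∞) φ → HasCompactSupport φ →
      ∫ x, grad φ x ⬝ᵥ vJ x ∂μ = 0)
    (ψ : Fin N → (Fin n → ℝ) → ℝ)
    (hψ : ∀ i, ContDiff ℝ (⊤ : ℕ∞) (ψ i)) (hψc : ∀ i, HasCompactSupport (ψ i))
    (KJ : Matrix (Fin N) (Fin N) ℝ)
    (hKJ : KJ = Matrix.of fun i j => ∫ x, ψ i x * (grad (ψ j) x ⬝ᵥ vJ x) ∂μ) :
    KJ + KJᵀ = 0 := by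
  subst hKJ
  ext i j
  simp only [Matrix.add_apply, Matrix.transpose_apply, Matrix.of_apply, Matrix.zero_apply]
  -- integrability of each integrand
  have hcont : ∀ a b : Fin N, Continuous fun x => ψ a x * (grad (ψ b) x ⬝ᵥ vJ x) := by
    intro a b
    have hg : Continuous fun x => grad (ψ b) x := by
      have := (hψ b).continuous_fderiv (by simp)
      exact continuous_pi fun k => (ContinuousLinearMap.apply ℝ ℝ (Pi.single k 1)).continuous.comp this
    exact ((hψ a).continuous).mul (continuous_finset_sum _ fun k _ =>
      ((continuous_apply k).comp hg).mul ((continuous_apply k).comp hvJ))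
  have hint : ∀ a b : Fin N, Integrable (fun x => ψ a x * (grad (ψ b) x ⬝ᵥ vJ x)) μ := by
    intro a b
    exact (hcont a b).integrable_of_hasCompactSupport ((hψc a).mul_right)
  rw [← integral_add (hint i j) (hint j i)]
  have key := hdiv (fun y => ψ i y * ψ j y) ((hψ i).mul (hψ j)) ((hψc i).mul_right)
  rw [← key]
  congr 1
  funext x
  rw [grad_mul _ _ (hψ i) (hψ j) x]
  simp [dotProduct, Finset.sum_add_distrib, Finset.mul_sum, add_mul, mul_assoc]
end

section
/- Let K_J, K_R ∈ ℝ^{N×N}, K_u ∈ ℝ^{N×m}, and let P ∈ ℝ^{N×N} be symmetric positive definite with P K_J + K_Jᵀ P = 0 and P K_R + K_Rᵀ P positive semidefinite. If Ψ : ℝ → ℝᴺ is differentiable with Ψ'(t) = (K_J − K_R) Ψ(t) + K_u u(t), then the generalized storage function t ↦ ½ Ψ(t)ᵀ P Ψ(t) is differentiable with derivative at most ⟨K_uᵀ P Ψ(t), u(t)⟩ for all t. -/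
/-!
Differentiating the storage along a trajectory gives `Ψᵀ P Ψ'` (by symmetry of `P`), and
substituting the dynamics splits it as `Ψᵀ P K_J Ψ − Ψᵀ P K_R Ψ + (K_uᵀ P Ψ)ᵀ u`. For symmetric `P`
one has `Ψᵀ P K Ψ = ½ Ψᵀ (P K + Kᵀ P) Ψ`, so the co-design conditions make the first term vanish
and the second nonnegative, leaving at most the supply rate.
-/

open Matrix

section Deriv

variable {𝕜 : Type*} [NontriviallyNormedField 𝕜] {ι κ : Type*} [Fintype ι]
  {f g : 𝕜 → ι → 𝕜} {f' g' : ι → 𝕜} {t : 𝕜}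

theorem HasDerivAt.dotProduct (hf : HasDerivAt f f' t) (hg : HasDerivAt g g' t) :
    HasDerivAt (fun s => f s ⬝ᵥ g s) (f' ⬝ᵥ g t + f t ⬝ᵥ g') t := by
  have hfi := hasDerivAt_pi.1 hf
  have hgi := hasDerivAt_pi.1 hg
  have := HasDerivAt.fun_sum (u := Finset.univ) fun i _ => (hfi i).fun_mul (hgi i)
  simp only [Finset.sum_add_distrib] at this
  exact this

theorem HasDerivAt.const_mulVec (A : Matrix κ ι 𝕜) (hf : HasDerivAt f f' t) :
    HasDerivAt (fun s => A *ᵥ f s) (A *ᵥ f') t :=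
  hasDerivAt_pi.2 fun k => by
    simpa [mulVec] using (hasDerivAt_const t (A k)).dotProduct hf

end Deriv

namespace Matrix

section Quadratic

variable {R : Type*} [CommRing R] {n : Type*} [Fintype n]

theorem dotProduct_transpose_mulVec_self (A : Matrix n n R) (x : n → R) :
    x ⬝ᵥ Aᵀ *ᵥ x = x ⬝ᵥ A *ᵥ x := by
  rw [dotProduct_mulVec, vecMul_transpose, dotProduct_comm]

theorem IsSymm.dotProduct_mulVec_comm {P : Matrix n n R} (hP : P.IsSymm) (x y : n → R) :
    x ⬝ᵥ P *ᵥ y = y ⬝ᵥ P *ᵥ x := by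
  rw [dotProduct_mulVec, ← mulVec_transpose, hP.eq, dotProduct_comm]

theorem IsSymm.dotProduct_mul_add_transpose_mul_mulVec {P : Matrix n n R} (hP : P.IsSymm)
    (K : Matrix n n R) (x : n → R) :
    x ⬝ᵥ (P * K + Kᵀ * P) *ᵥ x = 2 * (x ⬝ᵥ P *ᵥ K *ᵥ x) := by
  have hKP : Kᵀ * P = (P * K)ᵀ := by rw [transpose_mul, hP.eq]
  rw [add_mulVec, dotProduct_add, hKP, dotProduct_transpose_mulVec_self, ← mulVec_mulVec]
  ring

end Quadratic

theorem IsSymm.hasDerivAt_half_dotProduct_mulVec {𝕜 : Type*} [NontriviallyNormedField 𝕜]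
    [CharZero 𝕜] {n : Type*} [Fintype n] {P : Matrix n n 𝕜} (hP : P.IsSymm)
    {f : 𝕜 → n → 𝕜} {f' : n → 𝕜} {t : 𝕜} (hf : HasDerivAt f f' t) :
    HasDerivAt (fun s => (1 / 2 : 𝕜) * (f s ⬝ᵥ P *ᵥ f s)) (f t ⬝ᵥ P *ᵥ f') t := by
  have hquad := (hf.dotProduct (hf.const_mulVec P)).const_mul (1 / 2 : 𝕜)
  rwa [hP.dotProduct_mulVec_comm f', ← two_mul, ← mul_assoc,
    one_div_mul_cancel two_ne_zero, one_mul] at hquad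

theorem IsSymm.dotProduct_mulVec_dynamics_le_supply {N m : Type*} [Fintype N] [Fintype m]
    {KJ KR P : Matrix N N ℝ} (Ku : Matrix N m ℝ) (hP : P.IsSymm)
    (hPJ : P * KJ + KJᵀ * P = 0) (hPR : (P * KR + KRᵀ * P).PosSemidef) (x : N → ℝ) (w : m → ℝ) :
    x ⬝ᵥ P *ᵥ ((KJ - KR) *ᵥ x + Ku *ᵥ w) ≤ (Kuᵀ * P) *ᵥ x ⬝ᵥ w := by
  have hJ : x ⬝ᵥ P *ᵥ KJ *ᵥ x = 0 := by
    simpa [hPJ] using hP.dotProduct_mul_add_transpose_mul_mulVec KJ x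
  have hR : 0 ≤ x ⬝ᵥ P *ᵥ KR *ᵥ x := by
    have := hPR.dotProduct_mulVec_nonneg x
    rw [star_trivial, hP.dotProduct_mul_add_transpose_mul_mulVec] at this
    linarith
  have hu : x ⬝ᵥ P *ᵥ Ku *ᵥ w = (Kuᵀ * P) *ᵥ x ⬝ᵥ w := by
    rw [dotProduct_mulVec, ← mulVec_transpose, hP.eq, dotProduct_mulVec, ← mulVec_transpose,
      mulVec_mulVec]
  rw [sub_mulVec, mulVec_add, mulVec_sub, dotProduct_add, dotProduct_sub, hJ, hu]
  linarith

end Matrix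

theorem lifted_KpH_generalized_storage_passive_general {N m : ℕ}
    (KJ KR : Matrix (Fin N) (Fin N) ℝ)
    (Ku : Matrix (Fin N) (Fin m) ℝ)
    (P : Matrix (Fin N) (Fin N) ℝ)
    (hPsym : P.IsSymm)
    (hPJ : P * KJ + KJᵀ * P = 0)
    (hPR : (P * KR + KRᵀ * P).PosSemidef)
    (Ψ : ℝ → Fin N → ℝ) (u : ℝ → Fin m → ℝ)
    (hΨ : ∀ t, HasDerivAt Ψ ((KJ - KR).mulVec (Ψ t) + Ku.mulVec (u t)) t) :
    ∀ t, ∃ d : ℝ, HasDerivAt (fun s => (1 / 2 : ℝ) * (Ψ s ⬝ᵥ P.mulVec (Ψ s))) d t ∧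
      d ≤ (Kuᵀ * P).mulVec (Ψ t) ⬝ᵥ u t :=
  fun t => ⟨_, hPsym.hasDerivAt_half_dotProduct_mulVec (hΨ t),
    hPsym.dotProduct_mulVec_dynamics_le_supply Ku hPJ hPR (Ψ t) (u t)⟩

/-- **Passivity with a generalized quadratic storage function.**
If `P ≻ 0` satisfies the co-design conditions `P K_J + K_Jᵀ P = 0` and
`P K_R + K_Rᵀ P ⪰ 0`, then along trajectories of `Ψ' = (K_J − K_R)Ψ + K_u u` the storage
`t ↦ ½ Ψᵀ P Ψ` is differentiable with derivative at most `⟨K_uᵀ P Ψ, u⟩`. -/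
theorem lifted_KpH_generalized_storage_passive {N m : ℕ}
    (KJ KR : Matrix (Fin N) (Fin N) ℝ)
    (Ku : Matrix (Fin N) (Fin m) ℝ)
    (P : Matrix (Fin N) (Fin N) ℝ)
    (hPsym : P.IsSymm) (hPpd : P.PosDef)
    (hPJ : P * KJ + KJᵀ * P = 0)
    (hPR : (P * KR + KRᵀ * P).PosSemidef)
    (Ψ : ℝ → Fin N → ℝ) (u : ℝ → Fin m → ℝ)
    (hΨ : ∀ t, HasDerivAt Ψ ((KJ - KR).mulVec (Ψ t) + Ku.mulVec (u t)) t) :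
    ∀ t, ∃ d : ℝ, HasDerivAt (fun s => (1 / 2 : ℝ) * (Ψ s ⬝ᵥ P.mulVec (Ψ s))) d t ∧
      d ≤ (Kuᵀ * P).mulVec (Ψ t) ⬝ᵥ u t :=
  lifted_KpH_generalized_storage_passive_general KJ KR Ku P hPsym hPJ hPR Ψ u hΨ
end

section
/- Let K_J, K_R ∈ ℝ^{N×N} with K_J + K_Jᵀ = 0 and K_R symmetric positive semidefinite, K_u ∈ ℝ^{N×m}, and K_d ∈ ℝ^{m×m} symmetric positive definite. Define the closed-loop matrix A_cl = K_J − K_R − K_u K_d K_uᵀ. Assume the detectability condition: for every λ ∈ ℂ with Re λ ≥ 0 and every nonzero v ∈ ℂᴺ with A_cl v = λ v (identifying A_cl with its complexification), one has K_uᵀ v ≠ 0. Then every eigenvalue λ ∈ ℂ of A_cl satisfies Re λ < 0. -/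
/-!
Let `v` be an eigenvector of `A_cl` with eigenvalue `l`. Taking real parts in
`v* A_cl v = l ‖v‖²`, the skew part `K_J` contributes nothing, the dissipation `K_R` a
nonpositive amount, and the injected damping `K_u K_d K_uᵀ` the amount `-Re (w* K_d w)` with
`w = K_uᵀ v`. If `Re l ≥ 0`, detectability gives `w ≠ 0`, so this last term is negative
while `Re l ‖v‖² ≥ 0`, a contradiction.
-/

open Matrix ComplexOrder

namespace Matrix

variable {n p : Type*} [Fintype n] [Fintype p]

theorem dotProduct_mulVec_self_eq_zero_of_add_transpose_eq_zero {R : Type*} [CommRing R]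
    [NoZeroDivisors R] [CharZero R] {A : Matrix n n R} (hA : A + Aᵀ = 0) (x : n → R) :
    x ⬝ᵥ A *ᵥ x = 0 := by
  have hsym : x ⬝ᵥ Aᵀ *ᵥ x = x ⬝ᵥ A *ᵥ x := by
    rw [dotProduct_mulVec, vecMul_transpose, dotProduct_comm]
  have h2 : 2 * (x ⬝ᵥ A *ᵥ x) = x ⬝ᵥ (A + Aᵀ) *ᵥ x := by
    rw [add_mulVec, dotProduct_add, hsym, two_mul]
  rw [hA, zero_mulVec, dotProduct_zero] at h2
  simpa using h2

theorem re_star_dotProduct_map_ofReal_mulVec (M : Matrix n n ℝ) (v : n → ℂ) :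
    (star v ⬝ᵥ M.map (Complex.ofReal ·) *ᵥ v).re =
      (fun i => (v i).re) ⬝ᵥ M *ᵥ (fun i => (v i).re)
        + (fun i => (v i).im) ⬝ᵥ M *ᵥ (fun i => (v i).im) := by
  simp only [dotProduct, mulVec, map_apply, Pi.star_apply, Complex.star_def, Finset.mul_sum,
    Complex.re_sum, Complex.mul_re, Complex.mul_im, Complex.conj_re, Complex.conj_im,
    Complex.ofReal_re, Complex.ofReal_im, ← Finset.sum_add_distrib]
  congr 1; funext i; congr 1; funext j; ring

theorem re_star_dotProduct_map_ofReal_mulVec_eq_zero {A : Matrix n n ℝ} (hA : A + Aᵀ = 0)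
    (v : n → ℂ) : (star v ⬝ᵥ A.map (Complex.ofReal ·) *ᵥ v).re = 0 := by
  simp [re_star_dotProduct_map_ofReal_mulVec,
    dotProduct_mulVec_self_eq_zero_of_add_transpose_eq_zero hA]

theorem PosSemidef.re_star_dotProduct_map_ofReal_mulVec_nonneg {M : Matrix n n ℝ}
    (hM : M.PosSemidef) (v : n → ℂ) :
    0 ≤ (star v ⬝ᵥ M.map (Complex.ofReal ·) *ᵥ v).re := by
  rw [re_star_dotProduct_map_ofReal_mulVec]
  have := hM.dotProduct_mulVec_nonneg
  simp only [star_trivial] at this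
  exact add_nonneg (this _) (this _)

theorem PosDef.re_star_dotProduct_map_ofReal_mulVec_pos {M : Matrix n n ℝ}
    (hM : M.PosDef) {v : n → ℂ} (hv : v ≠ 0) :
    0 < (star v ⬝ᵥ M.map (Complex.ofReal ·) *ᵥ v).re := by
  rw [re_star_dotProduct_map_ofReal_mulVec]
  have hpos : ∀ {x : n → ℝ}, x ≠ 0 → 0 < star x ⬝ᵥ M *ᵥ x :=
    hM.dotProduct_mulVec_pos
  have hnonneg := hM.posSemidef.dotProduct_mulVec_nonneg
  simp only [star_trivial] at hpos hnonneg
  by_cases hre : (fun i => (v i).re) = 0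
  · have him : (fun i => (v i).im) ≠ 0 := fun him =>
      hv (funext fun i => Complex.ext (congrFun hre i) (congrFun him i))
    exact add_pos_of_nonneg_of_pos (hnonneg _) (hpos him)
  · exact add_pos_of_pos_of_nonneg (hpos hre) (hnonneg _)

theorem star_dotProduct_mul_mul_conjTranspose_mulVec {R : Type*} [CommRing R] [StarRing R]
    (B : Matrix n p R) (C : Matrix p p R) (v : n → R) :
    star v ⬝ᵥ (B * C * Bᴴ) *ᵥ v = star (Bᴴ *ᵥ v) ⬝ᵥ C *ᵥ (Bᴴ *ᵥ v) := by
  rw [← mulVec_mulVec, ← mulVec_mulVec, dotProduct_mulVec, star_mulVec,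
    conjTranspose_conjTranspose]

theorem re_star_dotProduct_mulVec_of_mulVec_eq_smul {M : Matrix n n ℂ} {l : ℂ} {v : n → ℂ}
    (hv : M *ᵥ v = l • v) : (star v ⬝ᵥ M *ᵥ v).re = l.re * (star v ⬝ᵥ v).re := by
  have him : (star v ⬝ᵥ v).im = 0 :=
    (Complex.nonneg_iff.mp (dotProduct_star_self_nonneg v)).2.symm
  rw [hv, dotProduct_smul, smul_eq_mul, Complex.mul_re, him, mul_zero, sub_zero]

end Matrix

theorem damping_injection_closed_loop_hurwitz_general {N m : ℕ}
    (KJ KR : Matrix (Fin N) (Fin N) ℝ)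
    (hKJ : KJ + KJᵀ = 0)
    (hKRpsd : KR.PosSemidef)
    (Ku : Matrix (Fin N) (Fin m) ℝ)
    (Kd : Matrix (Fin m) (Fin m) ℝ)
    (hKdpd : Kd.PosDef)
    (Acl : Matrix (Fin N) (Fin N) ℝ)
    (hAcl : Acl = KJ - KR - Ku * Kd * Kuᵀ)
    (hdet : ∀ (l : ℂ) (v : Fin N → ℂ), 0 ≤ l.re → v ≠ 0 →
      (Acl.map (Complex.ofReal ·)).mulVec v = l • v →
      (Kuᵀ.map (Complex.ofReal ·)).mulVec v ≠ 0) :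
    ∀ (l : ℂ) (v : Fin N → ℂ), v ≠ 0 →
      (Acl.map (Complex.ofReal ·)).mulVec v = l • v → l.re < 0 := by
  intro l v hv heig
  by_contra! hl
  set Kuc := Ku.map (Complex.ofReal ·)
  have hKuT : Kuᵀ.map (Complex.ofReal ·) = Kucᴴ := by ext i j; simp [Kuc]
  have hw : Kucᴴ *ᵥ v ≠ 0 := hKuT ▸ hdet l v hl hv heig
  have hsplit : Acl.map (Complex.ofReal ·) =
      KJ.map (Complex.ofReal ·) - KR.map (Complex.ofReal ·)
        - Kuc * Kd.map (Complex.ofReal ·) * Kucᴴ := by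
    ext i j; simp [hAcl, Kuc, Matrix.mul_apply, Finset.sum_mul]
  have hre := re_star_dotProduct_mulVec_of_mulVec_eq_smul heig
  rw [hsplit, sub_mulVec, sub_mulVec, dotProduct_sub, dotProduct_sub,
    star_dotProduct_mul_mul_conjTranspose_mulVec, Complex.sub_re, Complex.sub_re,
    re_star_dotProduct_map_ofReal_mulVec_eq_zero hKJ] at hre
  have hnorm : 0 ≤ (star v ⬝ᵥ v).re :=
    (Complex.nonneg_iff.mp (dotProduct_star_self_nonneg v)).1
  linarith [mul_nonneg hl hnorm, hKRpsd.re_star_dotProduct_map_ofReal_mulVec_nonneg v,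
    hKdpd.re_star_dotProduct_map_ofReal_mulVec_pos hw]

/-- **Hurwitz property of the closed-loop generator under detectability.**
With `K_J` skew-symmetric, `K_R ⪰ 0`, `K_d ≻ 0`, and
`A_cl = K_J − K_R − K_u K_d K_uᵀ`, if no eigenvector of (the complexification of) `A_cl`
with eigenvalue in the closed right half-plane lies in the kernel of `K_uᵀ`
(detectability), then every eigenvalue of `A_cl` has negative real part. -/
theorem damping_injection_closed_loop_hurwitz {N m : ℕ}
    (KJ KR : Matrix (Fin N) (Fin N) ℝ)
    (hKJ : KJ + KJᵀ = 0)
    (hKR : KR.IsSymm) (hKRpsd : KR.PosSemidef)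
    (Ku : Matrix (Fin N) (Fin m) ℝ)
    (Kd : Matrix (Fin m) (Fin m) ℝ)
    (hKd : Kd.IsSymm) (hKdpd : Kd.PosDef)
    (Acl : Matrix (Fin N) (Fin N) ℝ)
    (hAcl : Acl = KJ - KR - Ku * Kd * Kuᵀ)
    (hdet : ∀ (l : ℂ) (v : Fin N → ℂ), 0 ≤ l.re → v ≠ 0 →
      (Acl.map (Complex.ofReal ·)).mulVec v = l • v →
      (Kuᵀ.map (Complex.ofReal ·)).mulVec v ≠ 0) :
    ∀ (l : ℂ) (v : Fin N → ℂ), v ≠ 0 →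
      (Acl.map (Complex.ofReal ·)).mulVec v = l • v → l.re < 0 :=
  damping_injection_closed_loop_hurwitz_general KJ KR hKJ hKRpsd Ku Kd hKdpd Acl hAcl hdet
end
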